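/- For J > J_c := 1/(4(3−2√2)) and h ∈ ℝ, the second derivative of m ↦ p̃(m,h,J) = −J m² + J/2 + p((2m−1)J+h) is strictly positive if and only if φ₁(h,J) < m < φ₂(h,J), where φ_i(h,J) = 1/2 − h/(2J) + (1/(4J))·log a_i(J) and a_{1,2}(J) = [−(1/(2J)² + 8/(2J) − 4) ∓ (2 − 1/(2J))·√(1/(2J)² − 12/(2J) + 4)] / (4/(2J)). -/

import Mathlib

/-!
With `g = gH ξ`, `ξ = (2m - 1)J + h`, one has `p' = g`, `g² = e^{2ξ}(1 - g)` and
`g' = 2g(1 - g)/(2 - g)`, so `∂²p̃/∂m² = 4J²/(2 - g) · (-2g² + (2 + c)g - 2c)` with `c = 1/(2J)`.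
For `J > J_c` the discriminant `c² - 12c + 4` is positive and both roots of this quadratic lie in
`(0, 1)`. The map `u ↦ u²/(1 - u)` is increasing on `(0, 1)`, sends `g` to `e^{2ξ}` and the two
roots to `a₁(J)` and `a₂(J)`, so `root₁ < g < root₂` becomes `log a₁ < 2ξ < log a₂`, which is
`φ₁ < m < φ₂`.
-/

noncomputable def gH (h : ℝ) : ℝ :=
  (Real.sqrt (Real.exp (4 * h) + 4 * Real.exp (2 * h)) - Real.exp (2 * h)) / 2

noncomputable def pH (h : ℝ) : ℝ :=
  -(1 - gH h) / 2 - (1 / 2) * Real.log (1 - gH h)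

noncomputable def pTilde (m h J : ℝ) : ℝ :=
  -J * m ^ 2 + J / 2 + pH ((2 * m - 1) * J + h)

/-- `a_{1,2}(J)` of the paper: `s = -1` gives `a₁`, `s = 1` gives `a₂`. -/
noncomputable def aMD (s J : ℝ) : ℝ :=
  (-(1 / (2 * J) ^ 2 + 8 / (2 * J) - 4) +
      s * (2 - 1 / (2 * J)) * Real.sqrt (1 / (2 * J) ^ 2 - 12 / (2 * J) + 4)) / (4 / (2 * J))

/-- `φ_i(h,J) = 1/2 − h/(2J) + (1/(4J))·log a_i(J)`. -/
noncomputable def phiMD (s h J : ℝ) : ℝ :=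
  1 / 2 - h / (2 * J) + (1 / (4 * J)) * Real.log (aMD s J)

open Real Set

lemma exp_four_mul (x : ℝ) : exp (4 * x) = exp (2 * x) ^ 2 := by
  rw [← exp_nat_mul]; ring_nf

lemma gH_mem_Ioo (x : ℝ) : gH x ∈ Ioo 0 1 := by
  have hE := exp_pos (2 * x)
  have hs := sq_sqrt (by positivity : 0 ≤ exp (4 * x) + 4 * exp (2 * x))
  have hs0 := sqrt_nonneg (exp (4 * x) + 4 * exp (2 * x))
  rw [exp_four_mul] at hs hs0
  unfold gH
  rw [exp_four_mul]
  constructor <;> nlinarith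

lemma gH_sq_div_one_sub (x : ℝ) : gH x ^ 2 / (1 - gH x) = exp (2 * x) := by
  have hg := (gH_mem_Ioo x).2
  have hs := sq_sqrt (by positivity : 0 ≤ exp (4 * x) + 4 * exp (2 * x))
  rw [div_eq_iff (by linarith)]
  unfold gH
  rw [exp_four_mul] at hs ⊢
  linear_combination hs / 4

lemma strictMonoOn_sq_div_one_sub : StrictMonoOn (fun u : ℝ => u ^ 2 / (1 - u)) (Ioo 0 1) := by
  rintro u ⟨hu0, hu1⟩ v ⟨hv0, hv1⟩ huv
  simp only
  rw [div_lt_div_iff₀ (by linarith) (by linarith)]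
  nlinarith [mul_pos (sub_pos.2 huv) (show 0 < u + v - u * v by nlinarith)]

lemma lt_gH_iff {u : ℝ} (hu : u ∈ Ioo 0 1) (x : ℝ) :
    u < gH x ↔ log (u ^ 2 / (1 - u)) < 2 * x := by
  have hpos : 0 < u ^ 2 / (1 - u) := div_pos (pow_pos hu.1 2) (by linarith [hu.2])
  rw [log_lt_iff_lt_exp hpos, ← gH_sq_div_one_sub]
  exact (strictMonoOn_sq_div_one_sub.lt_iff_lt hu (gH_mem_Ioo x)).symm

lemma gH_lt_iff {u : ℝ} (hu : u ∈ Ioo 0 1) (x : ℝ) :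
    gH x < u ↔ 2 * x < log (u ^ 2 / (1 - u)) := by
  have hpos : 0 < u ^ 2 / (1 - u) := div_pos (pow_pos hu.1 2) (by linarith [hu.2])
  rw [lt_log_iff_exp_lt hpos, ← gH_sq_div_one_sub]
  exact (strictMonoOn_sq_div_one_sub.lt_iff_lt (gH_mem_Ioo x) hu).symm

lemma hasDerivAt_gH (x : ℝ) :
    HasDerivAt gH (2 * gH x * (1 - gH x) / (2 - gH x)) x := by
  have hE : HasDerivAt (fun y => exp (2 * y)) (exp (2 * x) * 2) x := by
    simpa using ((hasDerivAt_id x).const_mul 2).exp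
  have hE4 : HasDerivAt (fun y => exp (4 * y)) (exp (4 * x) * 4) x := by
    simpa using ((hasDerivAt_id x).const_mul 4).exp
  have hpos : 0 < exp (4 * x) + 4 * exp (2 * x) := by positivity
  refine ((((hE4.add (hE.const_mul 4)).sqrt hpos.ne').sub hE).div_const 2).congr_deriv ?_
  simp only [Pi.add_apply]
  have hg1 := (gH_mem_Ioo x).2
  have hs := sq_sqrt hpos.le
  have hs0 := sqrt_pos.2 hpos
  unfold gH at hg1 ⊢
  rw [exp_four_mul] at hs hs0 hg1 ⊢
  set s := √(exp (2 * x) ^ 2 + 4 * exp (2 * x))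
  set E := exp (2 * x)
  rw [eq_div_iff (by linarith)]
  field_simp
  -- after clearing the common factor `E + 2 - s` this is `s (s - E) = E (4 + E - s)`
  linear_combination -4 * (E + 2 - s) * hs

lemma hasDerivAt_pH (x : ℝ) : HasDerivAt pH (gH x) x := by
  have hg1 := (gH_mem_Ioo x).2
  have h1g : 1 - gH x ≠ 0 := by linarith
  have h2g : 2 - gH x ≠ 0 := by linarith
  have hsub : HasDerivAt (fun y => 1 - gH y) (-(2 * gH x * (1 - gH x) / (2 - gH x))) x := by
    simpa using (hasDerivAt_gH x).const_sub 1
  refine ((hsub.neg.div_const 2).sub ((hsub.log h1g).const_mul (1 / 2))).congr_deriv ?_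
  field_simp
  ring

lemma hasDerivAt_pTilde (h J m : ℝ) :
    HasDerivAt (fun m' => pTilde m' h J) (-2 * J * m + 2 * J * gH ((2 * m - 1) * J + h)) m := by
  have hξ : HasDerivAt (fun m' : ℝ => (2 * m' - 1) * J + h) (2 * J) m := by
    simpa using ((((hasDerivAt_id m).const_mul 2).sub_const 1).mul_const J).add_const h
  refine ((((hasDerivAt_pow 2 m).const_mul (-J)).add_const (J / 2)).add
    ((hasDerivAt_pH _).comp m hξ)).congr_deriv ?_
  ring

lemma deriv_deriv_pTilde {J : ℝ} (hJ : J ≠ 0) (h m : ℝ) :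
    deriv (deriv fun m' => pTilde m' h J) m =
      4 * J ^ 2 / (2 - gH ((2 * m - 1) * J + h)) *
        (-2 * gH ((2 * m - 1) * J + h) ^ 2 + (2 + 1 / (2 * J)) * gH ((2 * m - 1) * J + h)
          - 2 * (1 / (2 * J))) := by
  have hξ : HasDerivAt (fun m' : ℝ => (2 * m' - 1) * J + h) (2 * J) m := by
    simpa using ((((hasDerivAt_id m).const_mul 2).sub_const 1).mul_const J).add_const h
  rw [funext fun m' => (hasDerivAt_pTilde h J m').deriv]
  refine (((hasDerivAt_id m).const_mul (-2 * J)).add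
    (((hasDerivAt_gH _).comp m hξ).const_mul (2 * J))).deriv.trans ?_
  have h2g : 2 - gH ((2 * m - 1) * J + h) ≠ 0 := by linarith [(gH_mem_Ioo ((2 * m - 1) * J + h)).2]
  generalize gH ((2 * m - 1) * J + h) = g at h2g ⊢
  field_simp
  ring

lemma phiMD_lt_iff {J : ℝ} (hJ : 0 < J) (s h m : ℝ) :
    phiMD s h J < m ↔ log (aMD s J) < 2 * ((2 * m - 1) * J + h) := by
  have key : 2 * ((2 * m - 1) * J + h) - log (aMD s J) = 4 * J * (m - phiMD s h J) := by
    unfold phiMD; field_simp; ring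
  rw [← sub_pos, ← mul_pos_iff_of_pos_left (by positivity : (0 : ℝ) < 4 * J), ← key, sub_pos]

lemma lt_phiMD_iff {J : ℝ} (hJ : 0 < J) (s h m : ℝ) :
    m < phiMD s h J ↔ 2 * ((2 * m - 1) * J + h) < log (aMD s J) := by
  have key : log (aMD s J) - 2 * ((2 * m - 1) * J + h) = 4 * J * (phiMD s h J - m) := by
    unfold phiMD; field_simp; ring
  rw [← sub_pos, ← mul_pos_iff_of_pos_left (by positivity : (0 : ℝ) < 4 * J), ← key, sub_pos]

noncomputable def quadRoot (s c : ℝ) : ℝ := (2 + c + s * √(c ^ 2 - 12 * c + 4)) / 4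

lemma quadratic_pos_iff {c : ℝ} (hD : 0 ≤ c ^ 2 - 12 * c + 4) (g : ℝ) :
    0 < -2 * g ^ 2 + (2 + c) * g - 2 * c ↔ quadRoot (-1) c < g ∧ g < quadRoot 1 c := by
  have hd := sq_sqrt hD
  have hfac : -2 * g ^ 2 + (2 + c) * g - 2 * c =
      2 * ((g - quadRoot (-1) c) * (quadRoot 1 c - g)) := by
    unfold quadRoot; linear_combination (-1 / 8 : ℝ) * hd
  have hle : quadRoot (-1) c ≤ quadRoot 1 c := by
    unfold quadRoot; linarith [sqrt_nonneg (c ^ 2 - 12 * c + 4)]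
  rw [hfac, mul_pos_iff_of_pos_left two_pos, mul_pos_iff, sub_pos, sub_pos, sub_neg, sub_neg]
  exact ⟨fun h => h.resolve_right fun ⟨h₁, h₂⟩ => by linarith, Or.inl⟩

lemma aMD_eq_quadRoot {s J : ℝ} (hs : s = 1 ∨ s = -1) (hJ : J ≠ 0)
    (hD : 0 ≤ (1 / (2 * J)) ^ 2 - 12 * (1 / (2 * J)) + 4) (hr : quadRoot s (1 / (2 * J)) ≠ 1) :
    aMD s J = quadRoot s (1 / (2 * J)) ^ 2 / (1 - quadRoot s (1 / (2 * J))) := by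
  have hc : 1 / (2 * J) ≠ 0 := by simpa using hJ
  rw [eq_div_iff (sub_ne_zero.2 hr.symm)]
  unfold aMD quadRoot
  rw [show (1 : ℝ) / (2 * J) ^ 2 = (1 / (2 * J)) ^ 2 by ring,
    show (8 : ℝ) / (2 * J) = 8 * (1 / (2 * J)) by ring,
    show (12 : ℝ) / (2 * J) = 12 * (1 / (2 * J)) by ring,
    show (4 : ℝ) / (2 * J) = 4 * (1 / (2 * J)) by ring]
  have hd := sq_sqrt hD
  generalize 1 / (2 * J) = c at hc hd ⊢
  generalize √(c ^ 2 - 12 * c + 4) = d at hd ⊢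
  rcases hs with rfl | rfl <;> field_simp <;> linear_combination -2 * hd

lemma one_div_two_mul_mem_Ioo_of_critical {J : ℝ} (hJ : 1 / (4 * (3 - 2 * √2)) < J) :
    1 / (2 * J) ∈ Ioo 0 (6 - 4 * √2) := by
  have h2 := sq_sqrt (zero_le_two : (0 : ℝ) ≤ 2)
  have hgap : 0 < 3 - 2 * √2 := by nlinarith [sqrt_nonneg 2]
  have hJ0 : 0 < J := lt_trans (by positivity) hJ
  rw [div_lt_iff₀ (by positivity)] at hJ
  exact ⟨by positivity, (div_lt_iff₀ (by positivity)).2 (by linarith)⟩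

lemma discr_pos_of_lt {c : ℝ} (hc : c < 6 - 4 * √2) : 0 < c ^ 2 - 12 * c + 4 := by
  have h2 := sq_sqrt (zero_le_two : (0 : ℝ) ≤ 2)
  nlinarith [mul_pos (sub_pos.2 hc) (by linarith [sqrt_nonneg 2] : 0 < 6 + 4 * √2 - c)]

lemma quadRoot_mem_Ioo {s c : ℝ} (hs : s = 1 ∨ s = -1) (hc : c ∈ Ioo 0 (6 - 4 * √2)) :
    quadRoot s c ∈ Ioo 0 1 := by
  obtain ⟨hc0, hc⟩ := hc
  have h2 : 1 < √2 := by rw [lt_sqrt zero_le_one]; norm_num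
  have hd : √(c ^ 2 - 12 * c + 4) < 2 - c := by
    rw [sqrt_lt' (by linarith)]; nlinarith
  have hd0 := sqrt_nonneg (c ^ 2 - 12 * c + 4)
  unfold quadRoot
  rcases hs with rfl | rfl <;> constructor <;> linarith

/-- for `J > J_c` the second derivative of `m ↦ p̃(m,h,J)` is strictly
positive iff `φ₁(h,J) < m < φ₂(h,J)`. -/
theorem stmt16 (h J : ℝ) (hJ : 1 / (4 * (3 - 2 * Real.sqrt 2)) < J) (m : ℝ) :
    0 < deriv (deriv (fun m' : ℝ => pTilde m' h J)) m ↔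
      phiMD (-1) h J < m ∧ m < phiMD 1 h J := by
  have hc := one_div_two_mul_mem_Ioo_of_critical hJ
  have hJ0 : 0 < J := by linarith [one_div_pos.1 hc.1]
  have hD := (discr_pos_of_lt hc.2).le
  have hr₁ := quadRoot_mem_Ioo (Or.inr rfl) hc
  have hr₂ := quadRoot_mem_Ioo (Or.inl rfl) hc
  have hg := (gH_mem_Ioo ((2 * m - 1) * J + h)).2
  rw [deriv_deriv_pTilde hJ0.ne', mul_pos_iff_of_pos_left (div_pos (by positivity) (by linarith)),
    quadratic_pos_iff hD, lt_gH_iff hr₁, gH_lt_iff hr₂, phiMD_lt_iff hJ0, lt_phiMD_iff hJ0,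
    aMD_eq_quadRoot (Or.inr rfl) hJ0.ne' hD hr₁.2.ne, aMD_eq_quadRoot (Or.inl rfl) hJ0.ne' hD hr₂.2.ne]
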